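/- arXiv:1304.0690 — 8 statements merged into one kernel-verified Lean document; each statement's English description precedes it below -/
import Mathlib

section
/- Let C ⊆ ℝⁿ be closed and convex and T : ℝⁿ → ℝⁿ quasi-nonexpansive with Fix(T) ∩ C ≠ ∅. Then the following are equivalent: (a) D(r) = 0 ⟺ r = 0 (where D is the function from the previous contexts); (b) for every sequence {uᵏ} ⊆ C, if lim_{k→∞}(‖uᵏ − R(uᵏ)‖ − ‖T(uᵏ) − R(T(uᵏ))‖) = 0, then lim_{k→∞} ‖uᵏ − R(uᵏ)‖ = 0, where R := P_{Fix(T)} is the metric projection onto Fix(T). -/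
/-!
Write `d u = dist(u, Fix T)` and `g u = d u - d (T u)`, which is nonnegative by quasi-nonexpansiveness.
An infimum of nonnegative reals vanishes exactly when it is approached along a sequence, so `D r = 0`
iff some sequence in `{d ≥ r} ∩ C` has `g → 0`. Thus (a) forbids such sequences for `r > 0`, which
is (b) once a sequence with `d ↛ 0` is thinned to a subsequence staying in some `{d ≥ ε}`; and
`D 0 = 0` is witnessed by a fixed point in `C`.
-/

open Filter Metric Topology

lemma Metric.infDist_le_infDist_of_forall_dist_le {X : Type*} [PseudoMetricSpace X] {F : Set X}
    (hF : F.Nonempty) {x y : X} (h : ∀ w ∈ F, dist y w ≤ dist x w) :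
    infDist y F ≤ infDist x F :=
  (le_infDist hF).2 fun w hw => (infDist_le_dist_of_mem hw).trans (h w hw)

lemma tendsto_zero_iff_forall_eventually_lt {α : Type*} {l : Filter α} {a : α → ℝ}
    (ha : ∀ k, 0 ≤ a k) : Tendsto a l (𝓝 0) ↔ ∀ ε > 0, ∀ᶠ k in l, a k < ε := by
  rw [tendsto_order]
  exact and_iff_right_of_imp fun _ ε hε => Eventually.of_forall fun k => hε.trans_le (ha k)

lemma EReal.sInf_image_coe_eq_zero_iff {X : Type*} {S : Set X} {g : X → ℝ}
    (hg : ∀ u ∈ S, 0 ≤ g u) :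
    sInf ((fun u => (g u : EReal)) '' S) = 0 ↔
      ∃ u : ℕ → X, (∀ k, u k ∈ S) ∧ Tendsto (fun k => g (u k)) atTop (𝓝 0) := by
  constructor
  · intro h
    have hsmall : ∀ k : ℕ, ∃ u ∈ S, g u < 1 / (k + 1) := by
      intro k
      have : sInf ((fun u => (g u : EReal)) '' S) < ((1 / (k + 1) : ℝ) : EReal) := by
        rw [h]; exact_mod_cast Nat.one_div_pos_of_nat
      obtain ⟨_, ⟨u, hu, rfl⟩, hlt⟩ := sInf_lt_iff.1 this
      exact ⟨u, hu, EReal.coe_lt_coe_iff.1 hlt⟩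
    choose u hu hlt using hsmall
    exact ⟨u, hu, squeeze_zero (fun k => hg _ (hu k)) (fun k => (hlt k).le)
      tendsto_one_div_add_atTop_nhds_zero_nat⟩
  · rintro ⟨u, hu, hlim⟩
    refine le_antisymm ?_ (le_sInf ?_)
    · exact ge_of_tendsto' (continuous_coe_real_ereal.tendsto 0 |>.comp hlim)
        fun k => sInf_le ⟨u k, hu k, rfl⟩
    · rintro _ ⟨u, hu, rfl⟩
      exact EReal.coe_nonneg.2 (hg u hu)

theorem quasiShrinking_iff {X : Type*} {C : Set X} {d g : X → ℝ}
    (hd : ∀ u, 0 ≤ d u) (hg : ∀ u, 0 ≤ g u) (hz : ∃ z ∈ C, g z = 0) :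
    (∀ r : ℝ, 0 ≤ r → (sInf ((fun u => (g u : EReal)) '' ({u | d u ≥ r} ∩ C)) = 0 ↔ r = 0)) ↔
      ∀ u : ℕ → X, (∀ k, u k ∈ C) → Tendsto (fun k => g (u k)) atTop (𝓝 0) →
        Tendsto (fun k => d (u k)) atTop (𝓝 0) := by
  have hD {r : ℝ} := EReal.sInf_image_coe_eq_zero_iff (S := {u | d u ≥ r} ∩ C) fun u _ => hg u
  constructor
  · intro hshrink u huC hgu
    rw [tendsto_zero_iff_forall_eventually_lt fun k => hd (u k)]
    by_contra! hfar
    obtain ⟨ε, hε, hfreq⟩ := hfar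
    obtain ⟨φ, hφ, hφε⟩ := extraction_of_frequently_atTop hfreq
    have : sInf ((fun u => (g u : EReal)) '' ({u | d u ≥ ε} ∩ C)) = 0 :=
      hD.2 ⟨u ∘ φ, fun k => ⟨hφε k, huC _⟩, hgu.comp hφ.tendsto_atTop⟩
    exact hε.ne' ((hshrink ε hε.le).1 this)
  · intro hseq r hr
    refine ⟨fun hDr => ?_, ?_⟩
    · obtain ⟨u, hu, hgu⟩ := hD.1 hDr
      have hlim := hseq u (fun k => (hu k).2) hgu
      exact le_antisymm (ge_of_tendsto' hlim fun k => (hu k).1) hr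
    · rintro rfl
      obtain ⟨z, hzC, hgz⟩ := hz
      exact hD.2 ⟨fun _ => z, fun _ => ⟨hd z, hzC⟩, by simp [hgz]⟩

theorem stmt_8_general (n : ℕ) (T : EuclideanSpace ℝ (Fin n) → EuclideanSpace ℝ (Fin n))
    (hqne : ∀ x : EuclideanSpace ℝ (Fin n), ∀ w ∈ {x | T x = x}, ‖T x - w‖ ≤ ‖x - w‖)
    (C : Set (EuclideanSpace ℝ (Fin n)))
    (hint : ({x | T x = x} ∩ C).Nonempty)
    (D : ℝ → EReal)
    (hD : ∀ r : ℝ, D r = sInf ((fun u => ((Metric.infDist u {x | T x = x}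
        - Metric.infDist (T u) {x | T x = x} : ℝ) : EReal)) ''
        ({u | Metric.infDist u {x | T x = x} ≥ r} ∩ C)))
    (R : EuclideanSpace ℝ (Fin n) → EuclideanSpace ℝ (Fin n))
    (hR : ∀ u, R u ∈ {x | T x = x} ∧ dist u (R u) = Metric.infDist u {x | T x = x}) :
    ((∀ r : ℝ, 0 ≤ r → (D r = 0 ↔ r = 0)) ↔
      (∀ u : ℕ → EuclideanSpace ℝ (Fin n), (∀ k, u k ∈ C) →
        Filter.Tendsto (fun k => ‖u k - R (u k)‖ - ‖T (u k) - R (T (u k))‖)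
          Filter.atTop (nhds 0) →
        Filter.Tendsto (fun k => ‖u k - R (u k)‖) Filter.atTop (nhds 0))) := by
  set F := {x | T x = x}
  have hnorm (u) : ‖u - R u‖ = infDist u F := (dist_eq_norm u (R u)).symm.trans (hR u).2
  have hdec (u) : infDist (T u) F ≤ infDist u F :=
    infDist_le_infDist_of_forall_dist_le (hint.mono Set.inter_subset_left) fun w hw => by
      simpa only [dist_eq_norm] using hqne u w hw
  obtain ⟨z, hzF, hzC⟩ := hint
  obtain rfl : D = _ := funext hD
  simp only [hnorm]
  refine quasiShrinking_iff (fun u => infDist_nonneg) (fun u => sub_nonneg.2 (hdec u))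
    ⟨z, hzC, ?_⟩
  rw [show T z = z from hzF, sub_self]

theorem stmt_8 (n : ℕ) (T : EuclideanSpace ℝ (Fin n) → EuclideanSpace ℝ (Fin n))
    (hFix : {x | T x = x}.Nonempty)
    (hqne : ∀ x : EuclideanSpace ℝ (Fin n), ∀ w ∈ {x | T x = x}, ‖T x - w‖ ≤ ‖x - w‖)
    (C : Set (EuclideanSpace ℝ (Fin n))) (hC : IsClosed C) (hCconv : Convex ℝ C)
    (hint : ({x | T x = x} ∩ C).Nonempty)
    (D : ℝ → EReal)
    (hD : ∀ r : ℝ, D r = sInf ((fun u => ((Metric.infDist u {x | T x = x}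
        - Metric.infDist (T u) {x | T x = x} : ℝ) : EReal)) ''
        ({u | Metric.infDist u {x | T x = x} ≥ r} ∩ C)))
    (R : EuclideanSpace ℝ (Fin n) → EuclideanSpace ℝ (Fin n))
    (hR : ∀ u, R u ∈ {x | T x = x} ∧ dist u (R u) = Metric.infDist u {x | T x = x}) :
    ((∀ r : ℝ, 0 ≤ r → (D r = 0 ↔ r = 0)) ↔
      (∀ u : ℕ → EuclideanSpace ℝ (Fin n), (∀ k, u k ∈ C) →
        Filter.Tendsto (fun k => ‖u k - R (u k)‖ - ‖T (u k) - R (T (u k))‖)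
          Filter.atTop (nhds 0) →
        Filter.Tendsto (fun k => ‖u k - R (u k)‖) Filter.atTop (nhds 0))) :=
  stmt_8_general n T hqne C hint D hD R hR
end

section
/- Let C ⊆ ℝⁿ be closed, bounded and convex, and let T : ℝⁿ → ℝⁿ have Fix(T) ∩ C ≠ ∅. If T is strongly quasi-nonexpansive (α-SQNE for some α > 0) and I − T is closed at 0, then T is quasi-shrinking on C, i.e., the function D (defined in context) satisfies D(r) = 0 ⟺ r = 0. -/
/-!
The distance `d` to `Fix T` does not increase along `T`, and the SQNE inequality at a nearest
fixed point gives `α ‖u - T u‖² ≤ d(u)² - d(T u)² ≤ 2 d(u) (d(u) - d(T u))`. If `D(r) = 0` for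
some `r > 0`, there are points of the bounded set `{d ≥ r} ∩ C` whose decrease `d(u) - d(T u)`
tends to `0`; their residuals then tend to `0` as well, so by Bolzano–Weierstrass and the
closedness of `I - T` at `0` they accumulate at a fixed point, which lies at distance `≥ r` from
`Fix T`, a contradiction. `D(0) = 0` is attained at a fixed point in `C`.
-/

open Filter Topology Metric

section

variable {E : Type*} [NormedAddCommGroup E]

def StronglyQuasiNonexpansive (α : ℝ) (T : E → E) : Prop :=
  ∀ x, ∀ w ∈ {x | T x = x}, ‖T x - w‖ ^ 2 ≤ ‖x - w‖ ^ 2 - α * ‖x - T x‖ ^ 2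

/-- The paper's "`I - T` is closed at `0`". -/
def DemiclosedAtZero (T : E → E) : Prop :=
  ∀ (x : ℕ → E) (y : E), Tendsto x atTop (𝓝 y) →
    Tendsto (fun k => ‖T (x k) - x k‖) atTop (𝓝 0) → T y = y

variable {T : E → E} {α : ℝ}

theorem DemiclosedAtZero.isClosed_fixed (hT : DemiclosedAtZero T) : IsClosed {x | T x = x} :=
  IsSeqClosed.isClosed fun {x y} hx hxy => hT x y hxy <| by
    have hfixed : ∀ k, T (x k) = x k := hx
    simpa only [hfixed, sub_self, norm_zero] using tendsto_const_nhds

namespace StronglyQuasiNonexpansive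

variable [ProperSpace E]

theorem sq_infDist_map_le (hT : StronglyQuasiNonexpansive α T) (hFix : IsClosed {x | T x = x})
    (hne : {x | T x = x}.Nonempty) (u : E) :
    infDist (T u) {x | T x = x} ^ 2 ≤ infDist u {x | T x = x} ^ 2 - α * ‖u - T u‖ ^ 2 := by
  obtain ⟨w, hw, hdist⟩ := hFix.exists_infDist_eq_dist hne u
  have hTu : infDist (T u) {x | T x = x} ≤ ‖T u - w‖ := by
    rw [← dist_eq_norm]; exact infDist_le_dist_of_mem hw
  calc infDist (T u) {x | T x = x} ^ 2 ≤ ‖T u - w‖ ^ 2 := by gcongr; exact infDist_nonneg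
    _ ≤ ‖u - w‖ ^ 2 - α * ‖u - T u‖ ^ 2 := hT u w hw
    _ = infDist u {x | T x = x} ^ 2 - α * ‖u - T u‖ ^ 2 := by rw [hdist, dist_eq_norm]

theorem infDist_map_le (hT : StronglyQuasiNonexpansive α T) (hα : 0 ≤ α)
    (hFix : IsClosed {x | T x = x}) (hne : {x | T x = x}.Nonempty) (u : E) :
    infDist (T u) {x | T x = x} ≤ infDist u {x | T x = x} := by
  have := hT.sq_infDist_map_le hFix hne u
  exact (pow_le_pow_iff_left₀ infDist_nonneg infDist_nonneg two_ne_zero).mp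
    (by nlinarith [mul_nonneg hα (sq_nonneg ‖u - T u‖)])

theorem mul_sq_norm_sub_map_le (hT : StronglyQuasiNonexpansive α T) (hα : 0 ≤ α)
    (hFix : IsClosed {x | T x = x}) (hne : {x | T x = x}.Nonempty) (u : E) :
    α * ‖u - T u‖ ^ 2 ≤ 2 * infDist u {x | T x = x} *
      (infDist u {x | T x = x} - infDist (T u) {x | T x = x}) := by
  have hsq := hT.sq_infDist_map_le hFix hne u
  have hle := hT.infDist_map_le hα hFix hne u
  have h0 : 0 ≤ infDist (T u) {x | T x = x} := infDist_nonneg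
  nlinarith

theorem tendsto_norm_map_sub (hT : StronglyQuasiNonexpansive α T) (hα : 0 < α)
    (hFix : IsClosed {x | T x = x}) (hne : {x | T x = x}.Nonempty) {u : ℕ → E} {M : ℝ}
    (hM : ∀ k, infDist (u k) {x | T x = x} ≤ M)
    (hgap : Tendsto (fun k => infDist (u k) {x | T x = x} - infDist (T (u k)) {x | T x = x})
      atTop (𝓝 0)) :
    Tendsto (fun k => ‖T (u k) - u k‖) atTop (𝓝 0) := by
  have hbound : ∀ k, ‖T (u k) - u k‖ ≤ √(2 * M / α *
      (infDist (u k) {x | T x = x} - infDist (T (u k)) {x | T x = x})) := fun k => by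
    have hdec := sub_nonneg.mpr (hT.infDist_map_le hα.le hFix hne (u k))
    have hmul := hT.mul_sq_norm_sub_map_le hα.le hFix hne (u k)
    apply Real.le_sqrt_of_sq_le
    rw [div_mul_eq_mul_div, le_div_iff₀ hα, norm_sub_rev]
    nlinarith [mul_le_mul_of_nonneg_right (hM k) hdec]
  have hlim := (hgap.const_mul (2 * M / α)).sqrt
  rw [mul_zero, Real.sqrt_zero] at hlim
  exact squeeze_zero (fun _ => norm_nonneg _) hbound hlim

theorem exists_pos_le_infDist_sub_infDist_map (hT : StronglyQuasiNonexpansive α T) (hα : 0 < α)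
    (hclosed : DemiclosedAtZero T) (hne : {x | T x = x}.Nonempty) {C : Set E}
    (hC : Bornology.IsBounded C) {r : ℝ} (hr : 0 < r) :
    ∃ ε > 0, ∀ u ∈ {u | infDist u {x | T x = x} ≥ r} ∩ C,
      ε ≤ infDist u {x | T x = x} - infDist (T u) {x | T x = x} := by
  have hFix := hclosed.isClosed_fixed
  by_contra! hsmall
  choose u huS hu using fun k : ℕ => hsmall (1 / (k + 1)) Nat.one_div_pos_of_nat
  obtain ⟨w, hw⟩ := hne
  obtain ⟨M, hM⟩ := hC.subset_closedBall w
  have hdist : ∀ k, infDist (u k) {x | T x = x} ≤ M := fun k =>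
    (infDist_le_dist_of_mem hw).trans (mem_closedBall.mp (hM (huS k).2))
  have hgap := squeeze_zero (fun k => sub_nonneg.mpr (hT.infDist_map_le hα.le hFix ⟨w, hw⟩ (u k)))
    (fun k => (hu k).le) tendsto_one_div_add_atTop_nhds_zero_nat
  have hres := hT.tendsto_norm_map_sub hα hFix ⟨w, hw⟩ hdist hgap
  obtain ⟨y, hyS, φ, hφ, hy⟩ := tendsto_subseq_of_bounded (hC.subset Set.inter_subset_right) huS
  have hyr : infDist y {x | T x = x} ≥ r :=
    closure_minimal Set.inter_subset_left
      (isClosed_le continuous_const (continuous_infDist_pt _)) hyS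
  have hTy : T y = y := hclosed _ y hy (hres.comp hφ.tendsto_atTop)
  rw [infDist_zero_of_mem (s := {x | T x = x}) hTy] at hyr
  exact hr.not_ge hyr

end StronglyQuasiNonexpansive

end

theorem stmt_9_general (n : ℕ) (T : EuclideanSpace ℝ (Fin n) → EuclideanSpace ℝ (Fin n))
    (C : Set (EuclideanSpace ℝ (Fin n)))
    (hCbdd : Bornology.IsBounded C)
    (hint : ({x | T x = x} ∩ C).Nonempty)
    (α : ℝ) (hα : 0 < α)
    (hsqne : ∀ x : EuclideanSpace ℝ (Fin n), ∀ w ∈ {x | T x = x},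
      ‖T x - w‖ ^ 2 ≤ ‖x - w‖ ^ 2 - α * ‖x - T x‖ ^ 2)
    (hclosed : ∀ (x : ℕ → EuclideanSpace ℝ (Fin n)) (y : EuclideanSpace ℝ (Fin n)),
      Filter.Tendsto x Filter.atTop (nhds y) →
      Filter.Tendsto (fun k => ‖T (x k) - x k‖) Filter.atTop (nhds 0) →
      T y = y)
    (D : ℝ → EReal)
    (hD : ∀ r : ℝ, D r = sInf ((fun u => ((Metric.infDist u {x | T x = x}
        - Metric.infDist (T u) {x | T x = x} : ℝ) : EReal)) ''
        ({u | Metric.infDist u {x | T x = x} ≥ r} ∩ C))) :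
    ∀ r : ℝ, 0 ≤ r → (D r = 0 ↔ r = 0) := by
  intro r hr
  have hT : StronglyQuasiNonexpansive α T := hsqne
  have hFix := DemiclosedAtZero.isClosed_fixed hclosed
  obtain ⟨w, hw, hwC⟩ := hint
  rw [hD r]
  constructor
  · intro hD0
    by_contra hr0
    obtain ⟨ε, hε, hεle⟩ := hT.exists_pos_le_infDist_sub_infDist_map hα hclosed ⟨w, hw⟩ hCbdd
      (hr.lt_of_ne (Ne.symm hr0))
    have hεD : (ε : EReal) ≤ 0 := hD0 ▸ le_sInf fun _ ⟨u, hu, hεu⟩ =>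
      hεu ▸ EReal.coe_le_coe_iff.mpr (hεle u hu)
    exact hε.not_ge (EReal.coe_nonpos.mp hεD)
  · rintro rfl
    refine le_antisymm (sInf_le ⟨w, ⟨infDist_nonneg, hwC⟩, ?_⟩) (le_sInf ?_)
    · simp [show T w = w from hw, infDist_zero_of_mem hw]
    · rintro _ ⟨u, -, rfl⟩
      exact EReal.coe_nonneg.mpr <| sub_nonneg.mpr (hT.infDist_map_le hα.le hFix ⟨w, hw⟩ u)

theorem stmt_9 (n : ℕ) (T : EuclideanSpace ℝ (Fin n) → EuclideanSpace ℝ (Fin n))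
    (hFix : {x | T x = x}.Nonempty)
    (C : Set (EuclideanSpace ℝ (Fin n))) (hC : IsClosed C)
    (hCbdd : Bornology.IsBounded C) (hCconv : Convex ℝ C)
    (hint : ({x | T x = x} ∩ C).Nonempty)
    (α : ℝ) (hα : 0 < α)
    (hsqne : ∀ x : EuclideanSpace ℝ (Fin n), ∀ w ∈ {x | T x = x},
      ‖T x - w‖ ^ 2 ≤ ‖x - w‖ ^ 2 - α * ‖x - T x‖ ^ 2)
    (hclosed : ∀ (x : ℕ → EuclideanSpace ℝ (Fin n)) (y : EuclideanSpace ℝ (Fin n)),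
      Filter.Tendsto x Filter.atTop (nhds y) →
      Filter.Tendsto (fun k => ‖T (x k) - x k‖) Filter.atTop (nhds 0) →
      T y = y)
    (D : ℝ → EReal)
    (hD : ∀ r : ℝ, D r = sInf ((fun u => ((Metric.infDist u {x | T x = x}
        - Metric.infDist (T u) {x | T x = x} : ℝ) : EReal)) ''
        ({u | Metric.infDist u {x | T x = x} ≥ r} ∩ C))) :
    ∀ r : ℝ, 0 ≤ r → (D r = 0 ↔ r = 0) :=
  stmt_9_general n T C hCbdd hint α hα hsqne hclosed D hD
end

section
/- Let f : [0,∞) → [0,∞] be an increasing function with f(r) = 0 ⟺ r = 0, and let {b_k} ⊆ [0,∞) with lim_{k→∞} b_k = 0. Then any sequence {a_k} ⊆ [0,∞) satisfying a_{k+1} ≤ a_k − f(a_k) + b_k for all k converges to 0. -/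
/-!
Fix `ε > 0`. Since `f` is increasing and vanishes only at `0`, `f(a_k)` is bounded below by some
`c > 0` whenever `a_k ≥ ε / 2`; once `b_k < min (c / 2) (ε / 2)`, each such step decreases `a_k`
by at least `c / 2`. As `a_k ≥ 0`, the sequence must eventually drop below `ε / 2`, and from then
on it can never again exceed `ε`: below `ε / 2` a step adds less than `ε / 2`, above it the step
decreases.
-/

open Filter Topology

section Descent

variable {a b d : ℕ → ℝ}

theorem exists_ge_lt_of_forall_ge_le_sub (ha : ∀ k, 0 ≤ a k) {N : ℕ} {ε c : ℝ} (hc : 0 < c)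
    (hstep : ∀ k ≥ N, ε ≤ a k → a (k + 1) ≤ a k - c) : ∃ k ≥ N, a k < ε := by
  by_contra! h
  have hdec : ∀ m : ℕ, a (N + m) ≤ a N - m * c := by
    intro m
    induction m with
    | zero => simp
    | succ m ih =>
      have := hstep (N + m) (Nat.le_add_right N m) (h _ (Nat.le_add_right N m))
      push_cast
      rw [← add_assoc]
      linarith
  obtain ⟨m, hm⟩ := exists_nat_gt (a N / c)
  rw [div_lt_iff₀ hc] at hm
  linarith [hdec m, ha (N + m)]

theorem tendsto_zero_of_le_sub_add (ha : ∀ k, 0 ≤ a k) (hd : ∀ k, 0 ≤ d k)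
    (hbto : Tendsto b atTop (𝓝 0)) (hrec : ∀ k, a (k + 1) ≤ a k - d k + b k)
    (hdpos : ∀ ε > 0, ∃ c > 0, ∀ k, ε ≤ a k → c ≤ d k) :
    Tendsto a atTop (𝓝 0) := by
  refine tendsto_order.2 ⟨fun x hx => .of_forall fun k => hx.trans_le (ha k), fun ε hε => ?_⟩
  obtain ⟨c, hc, hcd⟩ := hdpos (ε / 2) (half_pos hε)
  obtain ⟨N, hN⟩ := eventually_atTop.1
    (hbto.eventually (gt_mem_nhds (lt_min (half_pos hc) (half_pos hε))))
  have hbig : ∀ k ≥ N, ε / 2 ≤ a k → a (k + 1) ≤ a k - c / 2 := fun k hk h => by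
    linarith [hrec k, hcd k h, hN k hk, min_le_left (c / 2) (ε / 2)]
  obtain ⟨k₀, hk₀, hsmall⟩ := exists_ge_lt_of_forall_ge_le_sub ha (half_pos hc) hbig
  refine eventually_atTop.2 ⟨k₀, fun k hk => ?_⟩
  induction k, hk using Nat.le_induction with
  | base => linarith
  | succ k hk ih =>
    rcases lt_or_ge (a k) (ε / 2) with h | h
    · linarith [hrec k, hd k, hN k (hk₀.trans hk), min_le_right (c / 2) (ε / 2)]
    · linarith [hbig k (hk₀.trans hk) h]

end Descent

namespace EReal

theorem ne_top_of_coe_le_sub_add {x y z : ℝ} {e : EReal} (h : (x : EReal) ≤ y - e + z) :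
    e ≠ ⊤ := by
  rintro rfl
  simp at h

theorem coe_le_sub_toReal_add {x y z : ℝ} {e : EReal} (h : (x : EReal) ≤ y - e + z)
    (he : e ≠ ⊥) : x ≤ y - e.toReal + z := by
  rw [← coe_toReal (ne_top_of_coe_le_sub_add h) he] at h
  exact_mod_cast h

end EReal

theorem stmt_10_general (f : ℝ → EReal)
    (hmono : ∀ r₁ r₂ : ℝ, 0 ≤ r₂ → r₂ ≤ r₁ → f r₂ ≤ f r₁)
    (hfzero : ∀ r : ℝ, 0 ≤ r → (f r = 0 ↔ r = 0))
    (b : ℕ → ℝ)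
    (hbto : Filter.Tendsto b Filter.atTop (nhds 0))
    (a : ℕ → ℝ) (ha : ∀ k, 0 ≤ a k)
    (hrec : ∀ k, ((a (k + 1) : ℝ) : EReal) ≤ ((a k : ℝ) : EReal) - f (a k) + ((b k : ℝ) : EReal)) :
    Filter.Tendsto a Filter.atTop (nhds 0) := by
  have hf0 : ∀ r, 0 ≤ r → 0 ≤ f r := fun r hr =>
    ((hfzero 0 le_rfl).2 rfl).symm.le.trans (hmono r 0 le_rfl hr)
  have hfa_ne_bot k : f (a k) ≠ ⊥ := ((hf0 _ (ha k)).trans_lt' EReal.bot_lt_zero).ne'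
  refine tendsto_zero_of_le_sub_add ha (fun k => EReal.toReal_nonneg (hf0 _ (ha k))) hbto
    (fun k => EReal.coe_le_sub_toReal_add (hrec k) (hfa_ne_bot k)) fun ε hε => ?_
  have hfε : 0 < f ε := (hf0 ε hε.le).lt_of_ne' ((hfzero ε hε.le).not.2 hε.ne')
  -- `f ε` may be `⊤`; capping it at `1` gives a finite positive lower bound.
  refine ⟨(min (f ε) 1).toReal, EReal.toReal_pos (lt_min hfε one_pos) ?_, fun k hk => ?_⟩
  · exact ne_top_of_le_ne_top (EReal.coe_ne_top 1) (min_le_right _ _)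
  · exact EReal.toReal_le_toReal ((min_le_left _ _).trans (hmono _ _ hε.le hk))
      (lt_min hfε one_pos).ne_bot (EReal.ne_top_of_coe_le_sub_add (hrec k))

theorem stmt_10 (f : ℝ → EReal)
    (hf0 : ∀ r : ℝ, 0 ≤ r → 0 ≤ f r)
    (hmono : ∀ r₁ r₂ : ℝ, 0 ≤ r₂ → r₂ ≤ r₁ → f r₂ ≤ f r₁)
    (hfzero : ∀ r : ℝ, 0 ≤ r → (f r = 0 ↔ r = 0))
    (b : ℕ → ℝ) (hb : ∀ k, 0 ≤ b k)
    (hbto : Filter.Tendsto b Filter.atTop (nhds 0))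
    (a : ℕ → ℝ) (ha : ∀ k, 0 ≤ a k)
    (hrec : ∀ k, ((a (k + 1) : ℝ) : EReal) ≤ ((a k : ℝ) : EReal) - f (a k) + ((b k : ℝ) : EReal)) :
    Filter.Tendsto a Filter.atTop (nhds 0) :=
  stmt_10_general f hmono hfzero b hbto a ha hrec
end

section
/- Let f : ℝⁿ → ℝ be convex with f_{≤0} ≠ ∅, and define the subgradient projection Π(y) := y − (f(y)/‖g_f(y)‖²) g_f(y) if f(y) > 0, and Π(y) := y if f(y) ≤ 0, where g_f(y) is a chosen subgradient of f at y. Then Π(y) equals the metric projection of y onto the set L := {x : f(y) + ⟨g_f(y), x − y⟩ ≤ 0} whenever f(y) > 0, Π is a cutter, and Fix(Π) = f_{≤0}. -/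
/-!
A subgradient `g y` of `f` at `y` with `f y > 0` is nonzero, since otherwise `y` would minimise
`f` at a positive value although `f` takes a nonpositive value. The subgradient inequality puts the
whole sublevel set `{f ≤ 0}` inside the half-space `L = {x | f y + ⟪g y, x - y⟫ ≤ 0}`, and the
subgradient step `y - (f y / ‖g y‖²) • g y` is the foot of the perpendicular from `y` to the
boundary hyperplane of `L`. The cutter inequality is then the obtuse-angle property of this
projection, tested against points of `{f ≤ 0} ⊆ L`.
-/

open scoped RealInnerProductSpace

section SubgradientProjection

variable {E : Type*} [NormedAddCommGroup E] [InnerProductSpace ℝ E]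

lemma inner_div_norm_sq_smul_self {v : E} (hv : v ≠ 0) (c : ℝ) :
    ⟪v, (c / ‖v‖ ^ 2) • v⟫ = c := by
  have : ‖v‖ ≠ 0 := norm_ne_zero_iff.mpr hv
  rw [real_inner_smul_right, real_inner_self_eq_norm_sq]
  field_simp

lemma halfSpace_boundary_sub_div_norm_sq_smul {v : E} (hv : v ≠ 0) (c : ℝ) (y : E) :
    c + ⟪v, (y - (c / ‖v‖ ^ 2) • v) - y⟫ = 0 := by
  rw [sub_sub_cancel_left, inner_neg_right, inner_div_norm_sq_smul_self hv, add_neg_cancel]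

lemma dist_sub_div_norm_sq_smul_le {v y z : E} {c : ℝ} (hc : 0 ≤ c)
    (hz : c + ⟪v, z - y⟫ ≤ 0) : dist y (y - (c / ‖v‖ ^ 2) • v) ≤ dist y z := by
  rcases eq_or_ne v 0 with rfl | hv
  · simp
  have hv' : 0 < ‖v‖ := norm_pos_iff.mpr hv
  have hcz : c ≤ ‖v‖ * ‖y - z‖ := calc
    c ≤ ⟪v, y - z⟫ := by rw [← neg_sub z y, inner_neg_right]; linarith
    _ ≤ ‖v‖ * ‖y - z‖ := real_inner_le_norm v (y - z)
  rw [dist_eq_norm, dist_eq_norm, sub_sub_cancel, norm_smul, Real.norm_of_nonneg (by positivity),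
    div_mul_eq_mul_div, div_le_iff₀ (by positivity)]
  nlinarith

noncomputable def subgradientProjection (f : E → ℝ) (g : E → E) (y : E) : E :=
  if 0 < f y then y - (f y / ‖g y‖ ^ 2) • g y else y

variable {f : E → ℝ} {g : E → E}

lemma subgradientProjection_of_pos {y : E} (hy : 0 < f y) :
    subgradientProjection f g y = y - (f y / ‖g y‖ ^ 2) • g y := if_pos hy

lemma subgradientProjection_of_nonpos {y : E} (hy : f y ≤ 0) :
    subgradientProjection f g y = y := if_neg hy.not_gt

lemma subgradient_ne_zero_of_pos (hlev : {x | f x ≤ 0}.Nonempty)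
    (hg : ∀ y x, f x ≥ f y + ⟪g y, x - y⟫) {y : E} (hy : 0 < f y) : g y ≠ 0 := by
  obtain ⟨x, hx⟩ := hlev
  intro hgy
  have := hg y x
  rw [hgy, inner_zero_left] at this
  linarith [show f x ≤ 0 from hx]

lemma setOf_subgradientProjection_eq_self (hlev : {x | f x ≤ 0}.Nonempty)
    (hg : ∀ y x, f x ≥ f y + ⟪g y, x - y⟫) :
    {x | subgradientProjection f g x = x} = {x | f x ≤ 0} := by
  ext x
  refine ⟨fun hx => show f x ≤ 0 from not_lt.mp fun hpos => ?_, subgradientProjection_of_nonpos⟩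
  have hstep : (f x / ‖g x‖ ^ 2) • g x = 0 := by
    rwa [Set.mem_ofPred_eq, subgradientProjection_of_pos hpos, sub_eq_self] at hx
  have hfx := inner_div_norm_sq_smul_self (subgradient_ne_zero_of_pos hlev hg hpos) (f x)
  rw [hstep, inner_zero_right] at hfx
  exact hpos.ne hfx

lemma inner_subgradientProjection_sub_le (hg : ∀ y x, f x ≥ f y + ⟪g y, x - y⟫) (x : E)
    {w : E} (hw : f w ≤ 0) :
    ⟪subgradientProjection f g x - x, subgradientProjection f g x - w⟫ ≤ 0 := by
  rcases le_or_gt (f x) 0 with hx | hx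
  · simp [subgradientProjection_of_nonpos hx]
  rcases eq_or_ne (g x) 0 with hgx | hgx
  · simp [subgradientProjection_of_pos hx, hgx]
  set s := f x / ‖g x‖ ^ 2
  have hs : 0 ≤ s := by positivity
  -- `⟪g x, P x - w⟫ = ⟪g x, x - w⟫ - f x ≥ -f w` by the subgradient inequality at `x`
  have hw' : 0 ≤ ⟪g x, (x - s • g x) - w⟫ := by
    have hsub := hg x w
    rw [← neg_sub x w, inner_neg_right] at hsub
    rw [sub_right_comm, inner_sub_right, inner_div_norm_sq_smul_self hgx]
    linarith
  rw [subgradientProjection_of_pos hx, sub_sub_cancel_left, inner_neg_left, real_inner_smul_left,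
    neg_nonpos]
  exact mul_nonneg hs hw'

end SubgradientProjection

theorem stmt_12_general (n : ℕ) (f : EuclideanSpace ℝ (Fin n) → ℝ)
    (hlev : {x | f x ≤ 0}.Nonempty)
    (g : EuclideanSpace ℝ (Fin n) → EuclideanSpace ℝ (Fin n))
    (hg : ∀ y x, f x ≥ f y + ⟪g y, x - y⟫)
    (Pi : EuclideanSpace ℝ (Fin n) → EuclideanSpace ℝ (Fin n))
    (hPi : ∀ y, Pi y = if 0 < f y then y - (f y / ‖g y‖ ^ 2) • g y else y) :
    (∀ y, 0 < f y →
      (Pi y ∈ {x | f y + ⟪g y, x - y⟫ ≤ 0} ∧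
        ∀ z ∈ {x | f y + ⟪g y, x - y⟫ ≤ 0}, dist y (Pi y) ≤ dist y z)) ∧
    (∀ x : EuclideanSpace ℝ (Fin n), ∀ w ∈ {x | Pi x = x}, ⟪Pi x - x, Pi x - w⟫ ≤ 0) ∧
    {x | Pi x = x} = {x | f x ≤ 0} := by
  obtain rfl : Pi = subgradientProjection f g := funext hPi
  have hfix := setOf_subgradientProjection_eq_self hlev hg
  refine ⟨fun y hy => ?_, fun x w hw => ?_, hfix⟩
  · rw [subgradientProjection_of_pos hy]
    exact ⟨(halfSpace_boundary_sub_div_norm_sq_smul (subgradient_ne_zero_of_pos hlev hg hy) _ _).le,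
      fun z hz => dist_sub_div_norm_sq_smul_le hy.le hz⟩
  · rw [hfix] at hw
    exact inner_subgradientProjection_sub_le hg x hw

theorem stmt_12 (n : ℕ) (f : EuclideanSpace ℝ (Fin n) → ℝ)
    (hconv : ConvexOn ℝ Set.univ f)
    (hlev : {x | f x ≤ 0}.Nonempty)
    (g : EuclideanSpace ℝ (Fin n) → EuclideanSpace ℝ (Fin n))
    (hg : ∀ y x, f x ≥ f y + ⟪g y, x - y⟫)
    (Pi : EuclideanSpace ℝ (Fin n) → EuclideanSpace ℝ (Fin n))
    (hPi : ∀ y, Pi y = if 0 < f y then y - (f y / ‖g y‖ ^ 2) • g y else y) :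
    (∀ y, 0 < f y →
      (Pi y ∈ {x | f y + ⟪g y, x - y⟫ ≤ 0} ∧
        ∀ z ∈ {x | f y + ⟪g y, x - y⟫ ≤ 0}, dist y (Pi y) ≤ dist y z)) ∧
    (∀ x : EuclideanSpace ℝ (Fin n), ∀ w ∈ {x | Pi x = x}, ⟪Pi x - x, Pi x - w⟫ ≤ 0) ∧
    {x | Pi x = x} = {x | f x ≤ 0} :=
  stmt_12_general n f hlev g hg Pi hPi
end

section
/- Let f : ℝⁿ → ℝ be convex with f_{≤0} ≠ ∅ and let Π be the subgradient projection relative to f (defined in context). Then I − Π is closed at 0: if xᵏ → x and ‖Π(xᵏ) − xᵏ‖ → 0, then f(x) ≤ 0, i.e., x ∈ Fix(Π). -/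
/-!
Suppose `f x₀ > 0`. A subgradient inequality turns an upper bound of `f` on a ball around `y`
into a bound on `‖g y‖`, so continuity of `f` at `x₀` makes the subgradients bounded by some `C`
near `x₀`. Since `f ≤ 0` somewhere, `g y ≠ 0` wherever `f y > 0` (else `y` would minimize `f`), and
the step length is `‖Π y - y‖ = f y / ‖g y‖ ≥ f y / C`. Along `xᵏ` this tends to `f x₀ / C > 0`,
contradicting `‖Π xᵏ - xᵏ‖ → 0`.
-/

open Filter Topology Metric
open scoped RealInnerProductSpace

variable {E : Type*} [NormedAddCommGroup E] [InnerProductSpace ℝ E]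

lemma mul_norm_le_of_subgradient {f : E → ℝ} {v y : E} {r M : ℝ} (hr : 0 ≤ r)
    (hv : ∀ x, f y + ⟪v, x - y⟫ ≤ f x) (hM : ∀ z ∈ closedBall y r, f z ≤ M) :
    r * ‖v‖ ≤ M - f y := by
  rcases eq_or_ne v 0 with rfl | hv0
  · simpa using hM y (mem_closedBall_self hr)
  have hnorm : 0 < ‖v‖ := norm_pos_iff.2 hv0
  set x := y + (r / ‖v‖) • v
  have hx : x ∈ closedBall y r := by
    rw [mem_closedBall, dist_eq_norm, add_sub_cancel_left, norm_smul, Real.norm_eq_abs,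
      abs_of_nonneg (div_nonneg hr hnorm.le), div_mul_cancel₀ _ hnorm.ne']
  have hinner : ⟪v, x - y⟫ = r * ‖v‖ := by
    rw [add_sub_cancel_left, real_inner_smul_right, real_inner_self_eq_norm_sq]
    field_simp
  linarith [hv x, hM x hx]

lemma subgradient_ne_zero_of_lt {f : E → ℝ} {v y z : E}
    (hv : ∀ x, f y + ⟪v, x - y⟫ ≤ f x) (hz : f z < f y) : v ≠ 0 := by
  rintro rfl
  linarith [hv z, inner_zero_left (𝕜 := ℝ) (z - y)]

lemma exists_pos_eventually_norm_subgradient_le {f : E → ℝ} {g : E → E} {x₀ : E}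
    (hf : ContinuousAt f x₀) (hg : ∀ y x, f y + ⟪g y, x - y⟫ ≤ f x) :
    ∃ C > 0, ∀ᶠ y in 𝓝 x₀, ‖g y‖ ≤ C := by
  obtain ⟨δ, hδ, hfδ⟩ := Metric.continuousAt_iff.1 hf 1 one_pos
  have hfbound : ∀ z, dist z x₀ < δ → |f z - f x₀| < 1 := by
    intro z hz
    simpa [Real.dist_eq] using hfδ hz
  refine ⟨8 / δ, by positivity, ?_⟩
  filter_upwards [ball_mem_nhds x₀ (half_pos hδ)] with y hy
  rw [mem_ball] at hy
  have hball : ∀ z ∈ closedBall y (δ / 4), f z ≤ f x₀ + 1 := by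
    intro z hz
    have := (abs_lt.1 (hfbound z (by linarith [dist_triangle z y x₀, mem_closedBall.1 hz]))).2
    linarith
  have hbound := mul_norm_le_of_subgradient (by positivity) (hg y) hball
  have hfy := (abs_lt.1 (hfbound y (by linarith))).1
  rw [le_div_iff₀ hδ]
  linarith

lemma norm_sub_smul_sub_self (y v : E) {c : ℝ} (hc : 0 ≤ c) :
    ‖y - (c / ‖v‖ ^ 2) • v - y‖ = c / ‖v‖ := by
  rw [sub_sub_cancel_left, norm_neg, norm_smul, Real.norm_eq_abs,
    abs_of_nonneg (by positivity)]
  rcases eq_or_ne ‖v‖ 0 with h | h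
  · simp [h]
  · field_simp

theorem stmt_13 (n : ℕ) (f : EuclideanSpace ℝ (Fin n) → ℝ)
    (hconv : ConvexOn ℝ Set.univ f)
    (hlev : {x | f x ≤ 0}.Nonempty)
    (g : EuclideanSpace ℝ (Fin n) → EuclideanSpace ℝ (Fin n))
    (hg : ∀ y x, f x ≥ f y + ⟪g y, x - y⟫)
    (Pi : EuclideanSpace ℝ (Fin n) → EuclideanSpace ℝ (Fin n))
    (hPi : ∀ y, Pi y = if 0 < f y then y - (f y / ‖g y‖ ^ 2) • g y else y)
    (x : ℕ → EuclideanSpace ℝ (Fin n)) (x₀ : EuclideanSpace ℝ (Fin n))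
    (hx : Filter.Tendsto x Filter.atTop (nhds x₀))
    (hPix : Filter.Tendsto (fun k => ‖Pi (x k) - x k‖) Filter.atTop (nhds 0)) :
    f x₀ ≤ 0 := by
  by_contra! hpos
  obtain ⟨z, hz⟩ := hlev
  have hcont : Continuous f := continuousOn_univ.1 (hconv.continuousOn isOpen_univ)
  obtain ⟨C, hC, hgC⟩ := exists_pos_eventually_norm_subgradient_le hcont.continuousAt hg
  have hfx : Tendsto (fun k => f (x k)) atTop (𝓝 (f x₀)) := (hcont.tendsto x₀).comp hx
  have hstep : ∀ᶠ k in atTop, f (x k) / C ≤ ‖Pi (x k) - x k‖ := by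
    filter_upwards [hx.eventually hgC, hfx.eventually (eventually_gt_nhds hpos)]
      with k hgk hfk
    have hg0 : g (x k) ≠ 0 := subgradient_ne_zero_of_lt (hg (x k)) (lt_of_le_of_lt hz hfk)
    rw [hPi, if_pos hfk, norm_sub_smul_sub_self _ _ hfk.le]
    exact div_le_div_of_nonneg_left hfk.le (norm_pos_iff.2 hg0) hgk
  have hlim : f x₀ / C ≤ 0 := le_of_tendsto_of_tendsto (hfx.div_const C) hPix hstep
  exact (div_pos hpos hC).not_ge hlim
end

section
/- Let G be an n×n positive definite symmetric matrix with eigenvalues in [λ₁, λ₂], 0 < λ₁ ≤ λ₂, let a ∈ ℝⁿ, c ∈ (0, λ₁/λ₂), and set r := λ₂(1+c)‖a‖/(λ₁ − λ₂c). Then for all x with ‖x‖ > r and F(x) := G(x − a) ≠ 0, we have ⟨F(x), x⟩ ≥ c‖F(x)‖·‖x‖. -/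
/-!
Since `G` is coercive, `⟪G (x - a), x⟫ ≥ λ₁‖x‖² - λ₂‖a‖‖x‖`, while `‖G (x - a)‖ ≤ λ₂(‖x‖ + ‖a‖)`.
The claimed inequality therefore follows once `λ₁‖x‖ - λ₂‖a‖ ≥ cλ₂(‖x‖ + ‖a‖)`, which is exactly
`‖x‖ ≥ λ₂(1 + c)‖a‖ / (λ₁ - λ₂c)`; the denominator is positive because `c < λ₁ / λ₂`.
-/

open scoped RealInnerProductSpace

lemma LinearMap.norm_apply_sub_le {E F : Type*} [SeminormedAddCommGroup E]
    [SeminormedAddCommGroup F] [Module ℝ E] [Module ℝ F] (G : E →ₗ[ℝ] F) {lam : ℝ}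
    (hlam : 0 ≤ lam) (hG : ∀ x, ‖G x‖ ≤ lam * ‖x‖) (x a : E) :
    ‖G (x - a)‖ ≤ lam * (‖x‖ + ‖a‖) :=
  (hG (x - a)).trans (mul_le_mul_of_nonneg_left (norm_sub_le x a) hlam)

lemma LinearMap.le_inner_apply_sub {E : Type*} [NormedAddCommGroup E] [InnerProductSpace ℝ E]
    (G : E →ₗ[ℝ] E) {lam₁ lam₂ : ℝ} (hlow : ∀ x, lam₁ * ‖x‖ ^ 2 ≤ ⟪G x, x⟫)
    (hupp : ∀ x, ‖G x‖ ≤ lam₂ * ‖x‖) (x a : E) :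
    lam₁ * ‖x‖ ^ 2 - lam₂ * ‖a‖ * ‖x‖ ≤ ⟪G (x - a), x⟫ := by
  have hGa : ⟪G a, x⟫ ≤ lam₂ * ‖a‖ * ‖x‖ :=
    (real_inner_le_norm _ _).trans (mul_le_mul_of_nonneg_right (hupp a) (norm_nonneg x))
  rw [map_sub, inner_sub_left]
  linarith [hlow x]

theorem stmt_15_general (n : ℕ)
    (G : EuclideanSpace ℝ (Fin n) →ₗ[ℝ] EuclideanSpace ℝ (Fin n))
    (lam₁ lam₂ : ℝ) (hlam₁ : 0 < lam₁)
    (hlow : ∀ x : EuclideanSpace ℝ (Fin n), lam₁ * ‖x‖ ^ 2 ≤ ⟪G x, x⟫)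
    (hupp : ∀ x : EuclideanSpace ℝ (Fin n), ‖G x‖ ≤ lam₂ * ‖x‖)
    (a : EuclideanSpace ℝ (Fin n)) (c : ℝ) (hc : c ∈ Set.Ioo 0 (lam₁ / lam₂)) :
    ∀ x : EuclideanSpace ℝ (Fin n),
      lam₂ * (1 + c) * ‖a‖ / (lam₁ - lam₂ * c) < ‖x‖ →
      G (x - a) ≠ 0 →
      ⟪G (x - a), x⟫ ≥ c * ‖G (x - a)‖ * ‖x‖ := by
  intro x hx _
  obtain ⟨hc₀, hc₁⟩ := hc
  have hlam₂ : 0 < lam₂ := by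
    rcases div_pos_iff.mp (hc₀.trans hc₁) with h | h
    · exact h.2
    · exact absurd h.1 hlam₁.not_gt
  have hgap : 0 < lam₁ - lam₂ * c := by
    rw [lt_div_iff₀ hlam₂] at hc₁
    linarith
  rw [div_lt_iff₀ hgap] at hx
  rw [ge_iff_le]
  calc c * ‖G (x - a)‖ * ‖x‖ ≤ c * (lam₂ * (‖x‖ + ‖a‖)) * ‖x‖ := by
        gcongr
        exact G.norm_apply_sub_le hlam₂.le hupp x a
    _ ≤ lam₁ * ‖x‖ ^ 2 - lam₂ * ‖a‖ * ‖x‖ := by nlinarith [norm_nonneg x]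
    _ ≤ ⟪G (x - a), x⟫ := G.le_inner_apply_sub hlow hupp x a

theorem stmt_15 (n : ℕ)
    (G : EuclideanSpace ℝ (Fin n) →ₗ[ℝ] EuclideanSpace ℝ (Fin n))
    (hsym : ∀ x y : EuclideanSpace ℝ (Fin n), ⟪G x, y⟫ = ⟪x, G y⟫)
    (lam₁ lam₂ : ℝ) (hlam₁ : 0 < lam₁) (hlam : lam₁ ≤ lam₂)
    (hlow : ∀ x : EuclideanSpace ℝ (Fin n), lam₁ * ‖x‖ ^ 2 ≤ ⟪G x, x⟫)
    (hupp : ∀ x : EuclideanSpace ℝ (Fin n), ‖G x‖ ≤ lam₂ * ‖x‖)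
    (a : EuclideanSpace ℝ (Fin n)) (c : ℝ) (hc : c ∈ Set.Ioo 0 (lam₁ / lam₂)) :
    ∀ x : EuclideanSpace ℝ (Fin n),
      lam₂ * (1 + c) * ‖a‖ / (lam₁ - lam₂ * c) < ‖x‖ →
      G (x - a) ≠ 0 →
      ⟪G (x - a), x⟫ ≥ c * ‖G (x - a)‖ * ‖x‖ :=
  stmt_15_general n G lam₁ lam₂ hlam₁ hlow hupp a c hc
end

section
/- Let T : ℝⁿ → ℝⁿ be a cutter, x ∈ ℝⁿ with x ≠ T(x), H := {u : ⟨u − T(x), x − T(x)⟩ ≤ 0}, α ∈ (0,2), and P_α := I + α(P_H − I). Then for every y ∈ ℝⁿ and every w ∈ Fix(T): ‖P_α(y) − w‖² ≤ ‖y − w‖² − ((2−α)/α)‖P_α(y) − y‖². Consequently, dist(P_α(y), Fix(T))² ≤ dist(y, Fix(T))² − ((2−α)/α)‖P_α(y) − y‖². -/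
open scoped RealInnerProductSpace

/-!
Since `T` is a cutter, `Fix T` lies in the half-space `H`, so for `w ∈ Fix T` the projection
`p = P_H y` makes an obtuse angle `⟪y - p, w - p⟫ ≤ 0`. Expanding
`‖y + α (p - y) - w‖²` and using `⟪y - w, p - y⟫ ≤ -‖p - y‖²` gives the Fejér-type
inequality; taking infima over `w ∈ Fix T` gives the distance version.
-/

section Relaxation

variable {E : Type*} [NormedAddCommGroup E] [InnerProductSpace ℝ E]

lemma norm_relaxation_sub_sq_le {y p w z : E} {α : ℝ} (hα : 0 ≤ α)
    (hz : z = y + α • (p - y)) (hobtuse : ⟪y - p, w - p⟫ ≤ 0) :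
    ‖z - w‖ ^ 2 ≤ ‖y - w‖ ^ 2 - ((2 - α) / α) * ‖z - y‖ ^ 2 := by
  have hinner : ⟪y - w, p - y⟫ ≤ -‖p - y‖ ^ 2 := by
    have : ⟪y - w, p - y⟫ = ⟪y - p, w - p⟫ - ‖p - y‖ ^ 2 := by
      rw [← real_inner_self_eq_norm_sq]
      simp only [inner_sub_left, inner_sub_right, real_inner_comm]
      ring
    linarith
  have hstep : ‖z - y‖ ^ 2 = α ^ 2 * ‖p - y‖ ^ 2 := by
    rw [hz, add_sub_cancel_left, norm_smul, mul_pow, Real.norm_eq_abs, sq_abs]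
  have hexpand : ‖z - w‖ ^ 2 = ‖y - w‖ ^ 2 + 2 * α * ⟪y - w, p - y⟫ + α ^ 2 * ‖p - y‖ ^ 2 := by
    rw [hz, add_sub_right_comm, norm_add_sq_real, inner_smul_right, norm_smul, mul_pow,
      Real.norm_eq_abs, sq_abs]
    ring
  have hweight : (2 - α) / α * (α ^ 2 * ‖p - y‖ ^ 2) = (2 - α) * α * ‖p - y‖ ^ 2 := by
    rcases hα.eq_or_lt with rfl | hpos
    · simp
    · field_simp
  rw [hexpand, hstep, hweight]
  nlinarith [mul_le_mul_of_nonneg_left hinner hα]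

end Relaxation

lemma Metric.infDist_sq_le_of_forall_dist_sq_le {X : Type*} [PseudoMetricSpace X] {s : Set X}
    {a b : X} {c : ℝ} (hs : s.Nonempty) (h : ∀ w ∈ s, dist a w ^ 2 ≤ dist b w ^ 2 - c) :
    Metric.infDist a s ^ 2 ≤ Metric.infDist b s ^ 2 - c := by
  set d := Metric.infDist a s ^ 2 + c
  have hd : ∀ w ∈ s, d ≤ dist b w ^ 2 := fun w hw => by
    have := pow_le_pow_left₀ (Metric.infDist_nonneg (x := a)) (Metric.infDist_le_dist_of_mem hw) 2
    linarith [h w hw]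
  rcases le_total d 0 with hneg | hpos
  · nlinarith [sq_nonneg (Metric.infDist b s)]
  · have : √d ≤ Metric.infDist b s :=
      (Metric.le_infDist hs).2 fun w hw => (Real.sqrt_le_left dist_nonneg).2 (hd w hw)
    have := pow_le_pow_left₀ (Real.sqrt_nonneg d) this 2
    rw [Real.sq_sqrt hpos] at this
    linarith

theorem stmt_16_general (n : ℕ) (T : EuclideanSpace ℝ (Fin n) → EuclideanSpace ℝ (Fin n))
    (hFix : {x | T x = x}.Nonempty)
    (hcut : ∀ x : EuclideanSpace ℝ (Fin n), ∀ w ∈ {x | T x = x},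
      ⟪T x - x, T x - w⟫ ≤ 0)
    (x : EuclideanSpace ℝ (Fin n))
    (α : ℝ) (hα : α ∈ Set.Ioo (0 : ℝ) 2)
    (PH : EuclideanSpace ℝ (Fin n) → EuclideanSpace ℝ (Fin n))
    (hPH : ∀ y, PH y ∈ {u | ⟪u - T x, x - T x⟫ ≤ 0} ∧
      ∀ u ∈ {u | ⟪u - T x, x - T x⟫ ≤ 0}, ⟪y - PH y, u - PH y⟫ ≤ 0)
    (Pα : EuclideanSpace ℝ (Fin n) → EuclideanSpace ℝ (Fin n))
    (hPα : ∀ y, Pα y = y + α • (PH y - y)) :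
    (∀ y : EuclideanSpace ℝ (Fin n), ∀ w ∈ {x | T x = x},
      ‖Pα y - w‖ ^ 2 ≤ ‖y - w‖ ^ 2 - ((2 - α) / α) * ‖Pα y - y‖ ^ 2) ∧
    (∀ y : EuclideanSpace ℝ (Fin n),
      Metric.infDist (Pα y) {x | T x = x} ^ 2 ≤
        Metric.infDist y {x | T x = x} ^ 2 - ((2 - α) / α) * ‖Pα y - y‖ ^ 2) := by
  have hFixH : ∀ w ∈ {x | T x = x}, ⟪w - T x, x - T x⟫ ≤ 0 := fun w hw => by
    have := hcut x w hw
    rwa [← neg_sub x, ← neg_sub w, inner_neg_neg, real_inner_comm] at this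
  have hFejer : ∀ y, ∀ w ∈ {x | T x = x},
      ‖Pα y - w‖ ^ 2 ≤ ‖y - w‖ ^ 2 - ((2 - α) / α) * ‖Pα y - y‖ ^ 2 := fun y w hw =>
    norm_relaxation_sub_sq_le hα.1.le (hPα y) ((hPH y).2 w (hFixH w hw))
  refine ⟨hFejer, fun y => Metric.infDist_sq_le_of_forall_dist_sq_le hFix fun w hw => ?_⟩
  simpa only [dist_eq_norm] using hFejer y w hw

theorem stmt_16 (n : ℕ) (T : EuclideanSpace ℝ (Fin n) → EuclideanSpace ℝ (Fin n))
    (hFix : {x | T x = x}.Nonempty)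
    (hcut : ∀ x : EuclideanSpace ℝ (Fin n), ∀ w ∈ {x | T x = x},
      ⟪T x - x, T x - w⟫ ≤ 0)
    (x : EuclideanSpace ℝ (Fin n)) (hx : x ≠ T x)
    (α : ℝ) (hα : α ∈ Set.Ioo (0 : ℝ) 2)
    (PH : EuclideanSpace ℝ (Fin n) → EuclideanSpace ℝ (Fin n))
    (hPH : ∀ y, PH y ∈ {u | ⟪u - T x, x - T x⟫ ≤ 0} ∧
      ∀ u ∈ {u | ⟪u - T x, x - T x⟫ ≤ 0}, ⟪y - PH y, u - PH y⟫ ≤ 0)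
    (Pα : EuclideanSpace ℝ (Fin n) → EuclideanSpace ℝ (Fin n))
    (hPα : ∀ y, Pα y = y + α • (PH y - y)) :
    (∀ y : EuclideanSpace ℝ (Fin n), ∀ w ∈ {x | T x = x},
      ‖Pα y - w‖ ^ 2 ≤ ‖y - w‖ ^ 2 - ((2 - α) / α) * ‖Pα y - y‖ ^ 2) ∧
    (∀ y : EuclideanSpace ℝ (Fin n),
      Metric.infDist (Pα y) {x | T x = x} ^ 2 ≤
        Metric.infDist y {x | T x = x} ^ 2 - ((2 - α) / α) * ‖Pα y - y‖ ^ 2) :=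
  stmt_16_general n T hFix hcut x α hα PH hPH Pα hPα
end

section
/- Let T : ℝⁿ → ℝⁿ be a cutter, and consider the algorithm x^{k+1} = P_{α_k}(z^k), where H_k := H(x^k, T(x^k)), z^k := x^k − ρ_k F(x^k)/‖F(x^k)‖ if F(x^k) ≠ 0 and z^k := x^k otherwise, P_{α_k} := I + α_k(P_{H_k} − I), α_k ∈ [μ, 2−μ] for some μ ∈ (0,1), and ρ_k > 0 with ρ_k → 0 and Σρ_k = ∞. Assume there exist q ∈ Fix(T), β > 0 and a bounded set E ⊆ ℝⁿ with ⟨F(x), x − q⟩ ≥ β‖F(x)‖ for all x ∉ E. Then any sequence {x^k} generated by the algorithm is bounded. -/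
/-!
Every point of `Fix T`, in particular `q`, lies in every halfspace `H_k`, so the relaxed projection
step never increases the distance to `q`. Once `ρ_k ≤ 2β`, the normalized `F`-step does not
increase it either when `x^k ∉ E`, while for `x^k ∈ E` it lands within `r + 2β` of `q`, where `E`
lies in the ball of radius `r` around `q`. Hence, from some index on,
`‖x^{k+1} - q‖ ≤ max ‖x^k - q‖ (r + 2β)`, and the distances to `q` are bounded.
-/

open Classical
open scoped RealInnerProductSpace
open Filter Metric

theorem bddAbove_range_of_eventually_le_max {α : Type*} [LinearOrder α] {d : ℕ → α} {R : α}
    (h : ∀ᶠ k in atTop, d (k + 1) ≤ max (d k) R) : BddAbove (Set.range d) := by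
  obtain ⟨K, hK⟩ := eventually_atTop.1 h
  have hbound : ∀ k ≥ K, d k ≤ max (d K) R := by
    intro k hk
    induction k, hk using Nat.le_induction with
    | base => exact le_max_left _ _
    | succ k hk ih => exact (hK k hk).trans (max_le ih (le_max_right _ _))
  exact (isBoundedUnder_of_eventually_le (eventually_atTop.2 ⟨K, hbound⟩)).bddAbove_range

section InnerProductSpace

variable {V : Type*} [NormedAddCommGroup V] [InnerProductSpace ℝ V]

theorem norm_add_smul_sub_sub_le {y p q : V} {α : ℝ} (hproj : ⟪y - p, q - p⟫ ≤ 0)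
    (hα0 : 0 ≤ α) (hα2 : α ≤ 2) : ‖y + α • (p - y) - q‖ ≤ ‖y - q‖ := by
  have hstep : y + α • (p - y) - q = (1 - α) • (y - p) - (q - p) := by module
  have hy : y - q = (y - p) - (q - p) := by abel
  rw [← sq_le_sq₀ (norm_nonneg _) (norm_nonneg _), hstep, hy,
    norm_sub_sq_real ((1 - α) • (y - p)), norm_sub_sq_real (y - p),
    norm_smul, real_inner_smul_left, Real.norm_eq_abs, mul_pow, sq_abs]
  nlinarith [mul_nonneg (mul_nonneg hα0 (sub_nonneg.2 hα2)) (sq_nonneg ‖y - p‖),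
    mul_nonpos_of_nonneg_of_nonpos hα0 hproj]

theorem norm_sub_smul_sub_le {f x q : V} {β t : ℝ} (hf : β * ‖f‖ ≤ ⟪f, x - q⟫) (ht : 0 ≤ t)
    (htβ : t * ‖f‖ ≤ 2 * β) : ‖x - t • f - q‖ ≤ ‖x - q‖ := by
  rw [← sq_le_sq₀ (norm_nonneg _) (norm_nonneg _), sub_right_comm, norm_sub_sq_real,
    real_inner_smul_right, real_inner_comm, norm_smul, Real.norm_of_nonneg ht]
  nlinarith [mul_le_mul_of_nonneg_left hf ht,
    mul_le_mul_of_nonneg_left htβ (mul_nonneg ht (norm_nonneg f))]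

theorem norm_div_norm_smul_le {ρ : ℝ} (hρ : 0 ≤ ρ) (f : V) : ‖(ρ / ‖f‖) • f‖ ≤ ρ := by
  rcases eq_or_ne f 0 with rfl | hf
  · simpa using hρ
  · rw [norm_smul, norm_div, norm_norm, div_mul_cancel₀ _ (norm_ne_zero_iff.2 hf),
      Real.norm_of_nonneg hρ]

theorem norm_sub_div_norm_smul_sub_le_max {f x q : V} {E : Set V} {β r ρ : ℝ}
    (hE : E ⊆ closedBall q r) (hcoerc : x ∉ E → β * ‖f‖ ≤ ⟪f, x - q⟫) (hρ : 0 ≤ ρ)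
    (hρβ : ρ ≤ 2 * β) : ‖x - (ρ / ‖f‖) • f - q‖ ≤ max ‖x - q‖ (r + 2 * β) := by
  have hstep := norm_div_norm_smul_le hρ f
  by_cases hx : x ∈ E
  · have hxq : ‖x - q‖ ≤ r := by simpa [dist_eq_norm] using hE hx
    calc ‖x - (ρ / ‖f‖) • f - q‖ = ‖(x - q) - (ρ / ‖f‖) • f‖ := by rw [sub_right_comm]
      _ ≤ ‖x - q‖ + ‖(ρ / ‖f‖) • f‖ := norm_sub_le _ _
      _ ≤ max ‖x - q‖ (r + 2 * β) := le_max_of_le_right (by linarith)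
  · have ht : 0 ≤ ρ / ‖f‖ := div_nonneg hρ (norm_nonneg f)
    rw [norm_smul, Real.norm_of_nonneg ht] at hstep
    exact le_max_of_le_left (norm_sub_smul_sub_le (hcoerc hx) ht (hstep.trans hρβ))

end InnerProductSpace

theorem stmt_17_general (n : ℕ) (T F : EuclideanSpace ℝ (Fin n) → EuclideanSpace ℝ (Fin n))
    (hcut : ∀ x : EuclideanSpace ℝ (Fin n), ∀ w ∈ {x | T x = x},
      ⟪T x - x, T x - w⟫ ≤ 0)
    (μ : ℝ) (hμ : μ ∈ Set.Ioo (0 : ℝ) 1)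
    (α : ℕ → ℝ) (hα : ∀ k, α k ∈ Set.Icc μ (2 - μ))
    (ρ : ℕ → ℝ) (hρpos : ∀ k, 0 < ρ k)
    (hρ0 : Filter.Tendsto ρ Filter.atTop (nhds 0))
    (q : EuclideanSpace ℝ (Fin n)) (hq : T q = q) (β : ℝ) (hβ : 0 < β)
    (E : Set (EuclideanSpace ℝ (Fin n))) (hE : Bornology.IsBounded E)
    (hcoerc : ∀ x ∉ E, ⟪F x, x - q⟫ ≥ β * ‖F x‖)
    (x z : ℕ → EuclideanSpace ℝ (Fin n))
    (P : ℕ → EuclideanSpace ℝ (Fin n) → EuclideanSpace ℝ (Fin n))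
    (hP : ∀ k y, P k y ∈ {u | ⟪u - T (x k), x k - T (x k)⟫ ≤ 0} ∧
      ∀ u ∈ {u | ⟪u - T (x k), x k - T (x k)⟫ ≤ 0}, ⟪y - P k y, u - P k y⟫ ≤ 0)
    (hz : ∀ k, z k = if F (x k) ≠ 0 then x k - (ρ k / ‖F (x k)‖) • F (x k) else x k)
    (hiter : ∀ k, x (k + 1) = z k + α k • (P k (z k) - z k)) :
    ∃ M : ℝ, ∀ k, ‖x k‖ ≤ M := by
  obtain ⟨r, hr⟩ := hE.subset_closedBall q
  have hq_mem : ∀ k, ⟪q - T (x k), x k - T (x k)⟫ ≤ 0 := fun k => by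
    rw [← neg_sub (T (x k)) q, ← neg_sub (T (x k)) (x k), inner_neg_neg, real_inner_comm]
    exact hcut (x k) q hq
  -- both branches of `hz` agree when `F (x k) = 0`, since `(ρ / ‖0‖) • 0 = 0`
  have hz' : ∀ k, z k = x k - (ρ k / ‖F (x k)‖) • F (x k) := fun k => by
    rw [hz k]; split_ifs with hF <;> simp_all
  have hstep : ∀ᶠ k in atTop, ‖x (k + 1) - q‖ ≤ max ‖x k - q‖ (r + 2 * β) := by
    filter_upwards [hρ0.eventually (eventually_le_nhds (by positivity : (0 : ℝ) < 2 * β))]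
      with k hρβ
    obtain ⟨hαμ, hα2μ⟩ := hα k
    calc ‖x (k + 1) - q‖ ≤ ‖z k - q‖ := by
          rw [hiter k]
          exact norm_add_smul_sub_sub_le ((hP k (z k)).2 q (hq_mem k)) (by linarith [hμ.1])
            (by linarith [hμ.1])
      _ ≤ max ‖x k - q‖ (r + 2 * β) := by
          rw [hz' k]
          exact norm_sub_div_norm_smul_sub_le_max hr (hcoerc (x k)) (hρpos k).le hρβ
  obtain ⟨M, hM⟩ := bddAbove_range_of_eventually_le_max (d := fun k => ‖x k - q‖) hstep
  exact ⟨‖q‖ + M, fun k => (norm_le_norm_add_norm_sub' (x k) q).trans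
    (add_le_add_right (hM ⟨k, rfl⟩) _)⟩

theorem stmt_17 (n : ℕ) (T F : EuclideanSpace ℝ (Fin n) → EuclideanSpace ℝ (Fin n))
    (hFix : {x | T x = x}.Nonempty)
    (hcut : ∀ x : EuclideanSpace ℝ (Fin n), ∀ w ∈ {x | T x = x},
      ⟪T x - x, T x - w⟫ ≤ 0)
    (μ : ℝ) (hμ : μ ∈ Set.Ioo (0 : ℝ) 1)
    (α : ℕ → ℝ) (hα : ∀ k, α k ∈ Set.Icc μ (2 - μ))
    (ρ : ℕ → ℝ) (hρpos : ∀ k, 0 < ρ k)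
    (hρ0 : Filter.Tendsto ρ Filter.atTop (nhds 0))
    (hρsum : ¬ Summable ρ)
    (q : EuclideanSpace ℝ (Fin n)) (hq : T q = q) (β : ℝ) (hβ : 0 < β)
    (E : Set (EuclideanSpace ℝ (Fin n))) (hE : Bornology.IsBounded E)
    (hcoerc : ∀ x ∉ E, ⟪F x, x - q⟫ ≥ β * ‖F x‖)
    (x z : ℕ → EuclideanSpace ℝ (Fin n))
    (P : ℕ → EuclideanSpace ℝ (Fin n) → EuclideanSpace ℝ (Fin n))
    (hP : ∀ k y, P k y ∈ {u | ⟪u - T (x k), x k - T (x k)⟫ ≤ 0} ∧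
      ∀ u ∈ {u | ⟪u - T (x k), x k - T (x k)⟫ ≤ 0}, ⟪y - P k y, u - P k y⟫ ≤ 0)
    (hz : ∀ k, z k = if F (x k) ≠ 0 then x k - (ρ k / ‖F (x k)‖) • F (x k) else x k)
    (hiter : ∀ k, x (k + 1) = z k + α k • (P k (z k) - z k)) :
    ∃ M : ℝ, ∀ k, ‖x k‖ ≤ M :=
  stmt_17_general n T F hcut μ hμ α hα ρ hρpos hρ0 q hq β hβ E hE hcoerc x z P hP hz hiter
end
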